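/- For all n ≥ 2 and k ≥ 1, T(2,n;k) = T(2,n-2;k-1) + T(2,n-1;k-1) + T(2,n-1;k). -/

import Mathlib

/-- Two grid squares (given as (row, column) pairs) are adjacent if they agree in one
coordinate and differ by one in the other. -/
def Adj (p q : ℕ × ℕ) : Prop :=
  (p.1 = q.1 ∧ (p.2 + 1 = q.2 ∨ q.2 + 1 = p.2)) ∨
  (p.2 = q.2 ∧ (p.1 + 1 = q.1 ∨ q.1 + 1 = p.1))

instance : DecidableRel Adj := fun _ _ => by unfold Adj; infer_instance

/-- `T m n k` is the number of ways to select `k` squares from an `m × n` grid with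
no two selected squares horizontally or vertically adjacent. -/
def T (m n k : ℕ) : ℕ :=
  (((Finset.range m ×ˢ Finset.range n).powersetCard k).filter
    (fun s => ∀ p ∈ s, ∀ q ∈ s, ¬ Adj p q)).card

/-!
Split the admissible selections in a `2 × (n + 2)` grid by their last column, which is empty or
holds exactly one square `(r, n + 1)`. Deleting that square is a bijection onto the selections of
`k - 1` squares in the `2 × (n + 1)` grid avoiding `(r, n)`. Summed over `r = 0, 1` these number
`2 T(2, n + 1; k - 1)` minus the selections with nonempty last column, and by the same split the
latter number `T(2, n + 1; k - 1) - T(2, n; k - 1)`.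
-/

open Finset

theorem Adj.symm {p q : ℕ × ℕ} (h : Adj p q) : Adj q p := by
  unfold Adj at *; omega

theorem not_adj_self (p : ℕ × ℕ) : ¬ Adj p p := by
  unfold Adj; omega

theorem adj_of_two_rows_iff {r n : ℕ} {q : ℕ × ℕ} (hr : r < 2) (hq₁ : q.1 < 2)
    (hq₂ : q.2 < n + 2) (hne : q ≠ (r, n + 1)) :
    Adj (r, n + 1) q ↔ q.2 = n + 1 ∨ q = (r, n) := by
  obtain ⟨a, b⟩ := q
  simp only [Adj, Prod.mk.injEq, ne_eq] at *
  omega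

def IsIndep (s : Finset (ℕ × ℕ)) : Prop := ∀ p ∈ s, ∀ q ∈ s, ¬ Adj p q

instance : DecidablePred IsIndep := fun _ => by unfold IsIndep; infer_instance

theorem isIndep_insert {x : ℕ × ℕ} {s : Finset (ℕ × ℕ)} :
    IsIndep (insert x s) ↔ IsIndep s ∧ ∀ q ∈ s, ¬ Adj x q := by
  simp only [IsIndep, forall_mem_insert]
  constructor
  · rintro ⟨⟨-, hx⟩, hs⟩
    exact ⟨fun p hp => (hs p hp).2, hx⟩
  · rintro ⟨hs, hx⟩
    exact ⟨⟨not_adj_self x, hx⟩, fun p hp => ⟨fun h => hx p hp h.symm, hs p hp⟩⟩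

def indepSets (m n k : ℕ) : Finset (Finset (ℕ × ℕ)) :=
  ((range m ×ˢ range n).powersetCard k).filter IsIndep

theorem T_eq_card_indepSets (m n k : ℕ) : T m n k = #(indepSets m n k) := rfl

theorem mem_indepSets {m n k : ℕ} {s : Finset (ℕ × ℕ)} :
    s ∈ indepSets m n k ↔ (∀ p ∈ s, p.1 < m ∧ p.2 < n) ∧ #s = k ∧ IsIndep s := by
  simp [indepSets, mem_powersetCard, subset_iff, and_assoc]

theorem filter_indepSets_succ_lt (m n k : ℕ) :
    (indepSets m (n + 1) k).filter (fun s => ∀ p ∈ s, p.2 < n) = indepSets m n k := by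
  ext s
  simp only [mem_filter, mem_indepSets]
  constructor
  · rintro ⟨⟨hb, hc, hi⟩, hlt⟩
    exact ⟨fun p hp => ⟨(hb p hp).1, hlt p hp⟩, hc, hi⟩
  · rintro ⟨hb, hc, hi⟩
    exact ⟨⟨fun p hp => ⟨(hb p hp).1, Nat.lt_succ_of_lt (hb p hp).2⟩, hc, hi⟩,
      fun p hp => (hb p hp).2⟩

theorem card_indepSets_two_succ (n k : ℕ) :
    #(indepSets 2 (n + 1) k) = #(indepSets 2 n k)
      + #((indepSets 2 (n + 1) k).filter ((0, n) ∈ ·))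
      + #((indepSets 2 (n + 1) k).filter ((1, n) ∈ ·)) := by
  set S := indepSets 2 (n + 1) k
  have h0 := S.card_filter_add_card_filter_not ((0, n) ∈ ·)
  have h1 := (S.filter ((0, n) ∉ ·)).card_filter_add_card_filter_not ((1, n) ∈ ·)
  rw [filter_filter, filter_filter] at h1
  have hbot : S.filter (fun s => (0, n) ∉ s ∧ (1, n) ∈ s) = S.filter ((1, n) ∈ ·) := by
    refine filter_congr fun s hs => ⟨And.right, fun h1 => ⟨fun h0 => ?_, h1⟩⟩
    exact (mem_indepSets.mp hs).2.2 _ h0 _ h1 (by simp [Adj])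
  have hempty : S.filter (fun s => (0, n) ∉ s ∧ (1, n) ∉ s) = indepSets 2 n k := by
    rw [← filter_indepSets_succ_lt]
    refine filter_congr fun s hs => ⟨fun ⟨h0, h1⟩ p hp => ?_, fun h => ⟨?_, ?_⟩⟩
    · obtain ⟨a, b⟩ := p
      obtain ⟨ha, hb⟩ := (mem_indepSets.mp hs).1 _ hp
      dsimp only at ha hb ⊢
      interval_cases a <;> grind
    · exact fun h0 => (h _ h0).false
    · exact fun h1 => (h _ h1).false
  rw [← h0, ← h1, hbot, hempty]; ring

theorem insert_mem_indepSets_two_iff {r n k : ℕ} {s : Finset (ℕ × ℕ)} (hr : r < 2)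
    (hx : (r, n + 1) ∉ s) :
    insert (r, n + 1) s ∈ indepSets 2 (n + 2) (k + 1) ↔
      s ∈ indepSets 2 (n + 1) k ∧ (r, n) ∉ s := by
  simp only [mem_indepSets, forall_mem_insert, card_insert_of_notMem hx, isIndep_insert,
    add_left_inj]
  have hne : ∀ q ∈ s, q ≠ (r, n + 1) := fun q hq h => hx (h ▸ hq)
  constructor
  · rintro ⟨⟨-, hb⟩, hc, hi, hadj⟩
    refine ⟨⟨fun p hp => ⟨(hb p hp).1, ?_⟩, hc, hi⟩, fun hrn => ?_⟩
    · by_contra hlt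
      exact hadj p hp ((adj_of_two_rows_iff hr (hb p hp).1 (hb p hp).2 (hne p hp)).mpr
        (Or.inl (by have := (hb p hp).2; omega)))
    · exact hadj _ hrn (by simp [Adj])
  · rintro ⟨⟨hb, hc, hi⟩, hrn⟩
    refine ⟨⟨⟨hr, by omega⟩, fun p hp => ⟨(hb p hp).1, Nat.lt_succ_of_lt (hb p hp).2⟩⟩,
      hc, hi, fun q hq h => ?_⟩
    rcases (adj_of_two_rows_iff hr (hb q hq).1 (Nat.lt_succ_of_lt (hb q hq).2) (hne q hq)).mp h
      with h | rfl
    · exact absurd h (hb q hq).2.ne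
    · exact hrn hq

theorem card_filter_indepSets_two_mem {r : ℕ} (hr : r < 2) (n k : ℕ) :
    #((indepSets 2 (n + 2) (k + 1)).filter ((r, n + 1) ∈ ·)) =
      #((indepSets 2 (n + 1) k).filter ((r, n) ∉ ·)) := by
  have hx : ∀ t ∈ indepSets 2 (n + 1) k, (r, n + 1) ∉ t := fun t ht h => by
    have := ((mem_indepSets.mp ht).1 _ h).2
    omega
  refine card_bij' (fun s _ => s.erase (r, n + 1)) (fun t _ => insert (r, n + 1) t)
    (fun s hs => ?_) (fun t ht => ?_) (fun s hs => insert_erase (mem_filter.mp hs).2)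
    (fun t ht => erase_insert (hx t (mem_filter.mp ht).1))
  · rw [mem_filter] at hs ⊢
    rw [← insert_mem_indepSets_two_iff hr (notMem_erase _ _), insert_erase hs.2]
    exact hs.1
  · rw [mem_filter] at ht ⊢
    exact ⟨(insert_mem_indepSets_two_iff hr (hx t ht.1)).mpr ht, mem_insert_self _ _⟩

theorem T2_pascal (n k : ℕ) (hn : 2 ≤ n) (hk : 1 ≤ k) :
    T 2 n k = T 2 (n - 2) (k - 1) + T 2 (n - 1) (k - 1) + T 2 (n - 1) k := by
  obtain ⟨n, rfl⟩ : ∃ m, n = m + 2 := ⟨n - 2, by omega⟩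
  obtain ⟨k, rfl⟩ : ∃ j, k = j + 1 := ⟨k - 1, by omega⟩
  simp only [T_eq_card_indepSets, Nat.add_sub_cancel, show n + 2 - 1 = n + 1 from rfl]
  have htop := card_filter_indepSets_two_mem (r := 0) (by norm_num) n k
  have hbot := card_filter_indepSets_two_mem (r := 1) (by norm_num) n k
  have hlast := card_indepSets_two_succ (n + 1) (k + 1)
  have hprev := card_indepSets_two_succ n k
  have h0 := (indepSets 2 (n + 1) k).card_filter_add_card_filter_not ((0, n) ∈ ·)
  have h1 := (indepSets 2 (n + 1) k).card_filter_add_card_filter_not ((1, n) ∈ ·)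
  linarith
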